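/- Insertion of a melonic dipole on a color-0 edge of a graph G of the tetrahedral model increases the number of bubbles by 2 and the total number of faces by exactly 3. -/

import Mathlib

/-!  A combinatorial model of the Feynman graphs of the rank-3 tetrahedral
(`O(N)^3`) tensor model.

A graph consists of a finite set `B` of bubbles (copies of the tetrahedron
`K_4`); each bubble has four vertices, so the vertex set is `B × Fin 4`.
Inside every bubble the edges of colors `1,2,3` are given once and for all by
the three fixed-point-free involutions of `Fin 4` (the proper 3-edge-coloring
of `K_4`).  The color-0 propagator edges, one per vertex, are encoded by a
fixed-point-free involution `pairing` of the vertex set. -/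

open Equiv

/-- The color-`c` (for `c ∈ {1,2,3}`, here `c : Fin 3`) perfect matching on the
four vertices of a tetrahedral bubble. -/
def bubblePerm : Fin 3 → Equiv.Perm (Fin 4) :=
  ![Equiv.swap 0 1 * Equiv.swap 2 3,
    Equiv.swap 0 2 * Equiv.swap 1 3,
    Equiv.swap 0 3 * Equiv.swap 1 2]

/-- A Feynman graph of the tetrahedral tensor model: a finite set of `K_4`
bubbles together with a fixed-point-free involution of the vertex set
describing the color-0 edges. -/
structure TGraph where
  B : Type
  [fintypeB : Fintype B]
  [decB : DecidableEq B]
  pairing : Equiv.Perm (B × Fin 4)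
  invol : ∀ v, pairing (pairing v) = v
  fixfree : ∀ v, pairing v ≠ v

attribute [instance] TGraph.fintypeB TGraph.decB

namespace TGraph

/-- The vertex set of a graph. -/
abbrev V (G : TGraph) : Type := G.B × Fin 4

/-- The permutation of the vertices given by the color-`c` edges inside the
bubbles. -/
def colPerm (G : TGraph) (c : Fin 3) : Equiv.Perm G.V :=
  (Equiv.refl G.B).prodCongr (bubblePerm c)

/-- The number of bubbles of a graph. -/
def b (G : TGraph) : ℕ := Fintype.card G.B

/-- The subgroup of permutations of the vertices generated by the color-0
pairing and the color-`c` matching: its orbits are exactly the faces of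
color `c` (cycles alternating colors `0` and `c`). -/
def faceGroup (G : TGraph) (c : Fin 3) : Subgroup (Equiv.Perm G.V) :=
  Subgroup.closure {G.pairing, G.colPerm c}

/-- Two vertices lie on the same face of color `c`. -/
def sameFace (G : TGraph) (c : Fin 3) (u v : G.V) : Prop :=
  u ∈ MulAction.orbit (G.faceGroup c) v

/-- The number of faces of color `c` of the graph. -/
noncomputable def numFaces (G : TGraph) (c : Fin 3) : ℕ :=
  Nat.card (MulAction.orbitRel.Quotient (G.faceGroup c) G.V)

/-- The total number of faces of the graph. -/
noncomputable def F (G : TGraph) : ℕ := ∑ c : Fin 3, G.numFaces c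

/-- The length of the face of color `c` through the vertex `v` (a face of
length `n` consists of `n` color-0 edges and `n` color-`c` edges, hence `2n`
vertices). -/
noncomputable def faceLength (G : TGraph) (c : Fin 3) (v : G.V) : ℕ :=
  Nat.card (MulAction.orbit (G.faceGroup c) v) / 2

/-- The subgroup generated by all edges of the graph. -/
def fullGroup (G : TGraph) : Subgroup (Equiv.Perm G.V) :=
  Subgroup.closure ({G.pairing} ∪ Set.range G.colPerm)

/-- A graph is connected if any vertex can be reached from any other one along
its edges. -/
def Connected (G : TGraph) : Prop :=
  ∀ u v : G.V, u ∈ MulAction.orbit G.fullGroup v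

/-- One step along an edge of the graph avoiding the color-0 edges whose
endpoints belong to `S`. -/
def stepAvoiding (G : TGraph) (S : Set G.V) (u v : G.V) : Prop :=
  (∃ c, v = G.colPerm c u) ∨ (v = G.pairing u ∧ u ∉ S ∧ v ∉ S)

/-- Reachability in the graph with the color-0 edges meeting `S` removed. -/
def reachAvoiding (G : TGraph) (S : Set G.V) : G.V → G.V → Prop :=
  Relation.ReflTransGen (G.stepAvoiding S)

/-- The pair of color-0 edges through the vertices `u` and `w` disconnects the
graph when removed.  Together with the requirement that the two edges be
distinct, this is the notion of a 2-edge-cut of color-0 edges. -/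
def CutDisconnects (G : TGraph) (u w : G.V) : Prop :=
  ¬ ∀ x y : G.V, G.reachAvoiding {u, G.pairing u, w, G.pairing w} x y

/-- Two vertices are connected by a 2-point function if they are joined by a
color-0 edge, or if their two (distinct) color-0 edges form a 2-edge-cut. -/
def TwoPoint (G : TGraph) (x y : G.V) : Prop :=
  G.pairing x = y ∨ (y ≠ x ∧ y ≠ G.pairing x ∧ G.CutDisconnects x y)

/-- The flip of the two color-0 edges `{u, pairing u}` and `{w, pairing w}`
(assumed distinct) which reconnects `u` with `w` (and `pairing u` with
`pairing w`): the pairing is conjugated by the transposition exchanging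
`pairing u` and `w`.  The other flip of this pair of edges is
`G.flip u (G.pairing w)`. -/
def flip (G : TGraph) (u w : G.V) : TGraph where
  B := G.B
  pairing := Equiv.swap (G.pairing u) w * G.pairing * Equiv.swap (G.pairing u) w
  invol := by
    intro v
    simp only [Equiv.Perm.mul_apply, Equiv.swap_apply_self, G.invol]
  fixfree := by
    intro v h
    simp only [Equiv.Perm.mul_apply] at h
    have h' : G.pairing (Equiv.swap (G.pairing u) w v) = Equiv.swap (G.pairing u) w v := by
      have := congrArg (Equiv.swap (G.pairing u) w) h
      simpa using this
    exact G.fixfree _ h'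

/-- The face of color `c` through the color-0 edge `{v, pairing v}` has
length 2 (it consists of this edge, a color-`c` edge, a second color-0 edge
and a second color-`c` edge closing the cycle). -/
def FaceLen2 (G : TGraph) (c : Fin 3) (v : G.V) : Prop :=
  G.pairing v ≠ G.colPerm c v ∧
    G.pairing (G.colPerm c (G.pairing v)) = G.colPerm c v

/-- A proper face of length 2 of color `c` through `v`: a face of length 2
whose two color-0 edges connect two distinct bubbles. -/
def ProperFace2 (G : TGraph) (c : Fin 3) (v : G.V) : Prop :=
  G.FaceLen2 c v ∧ (G.pairing v).1 ≠ v.1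

/-- A graph maximizes the number of faces if it is connected and no connected
graph with the same number of bubbles has more faces. -/
def MaximizesFaces (G : TGraph) : Prop :=
  G.Connected ∧ ∀ H : TGraph, H.Connected → H.b = G.b → H.F ≤ G.F

/-- Isomorphisms of graphs: bijections of the vertex sets commuting with the
color-0 pairing and with the colored matchings inside the bubbles. -/
structure Iso (G H : TGraph) where
  toEquiv : G.V ≃ H.V
  map_pairing : ∀ v, toEquiv (G.pairing v) = H.pairing (toEquiv v)
  map_col : ∀ c v, toEquiv (G.colPerm c v) = H.colPerm c (toEquiv v)

/-- Two graphs are isomorphic. -/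
def IsIso (G H : TGraph) : Prop := Nonempty (Iso G H)

end TGraph

open TGraph

/-- The leading-order two-bubble graph `G_2`: two tetrahedral bubbles with
corresponding vertices joined by four color-0 edges, so that all six faces
have length 2. -/
def G2 : TGraph where
  B := Fin 2
  pairing := (Equiv.swap (0 : Fin 2) 1).prodCongr (Equiv.refl (Fin 4))
  invol := by
    rintro ⟨i, k⟩
    simp [Equiv.prodCongr_apply, Equiv.swap_apply_self]
  fixfree := by
    rintro ⟨i, k⟩ h
    have hi : Equiv.swap (0 : Fin 2) 1 i = i := congrArg Prod.fst h
    fin_cases i <;> simp_all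

/-- The double tadpole `G_1^{(c)}`: one tetrahedral bubble whose two color-0
edges each join two vertices already adjacent by an edge of color `c`. -/
def G1 (c : Fin 3) : TGraph where
  B := Fin 1
  pairing := (Equiv.refl (Fin 1)).prodCongr (bubblePerm c)
  invol := by
    rintro ⟨i, k⟩
    have hk : ∀ j : Fin 4, bubblePerm c (bubblePerm c j) = j := by
      fin_cases c <;> decide
    simp [Equiv.prodCongr_apply, hk]
  fixfree := by
    rintro ⟨i, k⟩ h
    have hk : bubblePerm c k = k := congrArg Prod.snd h
    have hne : ∀ j : Fin 4, bubblePerm c j ≠ j := by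
      fin_cases c <;> decide
    exact hne k hk

namespace TGraph

variable (H K : TGraph)

/-- The image of a vertex of `H` in the glued graph. -/
def inlV (x : H.V) : (H.B ⊕ K.B) × Fin 4 := (Sum.inl x.1, x.2)

/-- The image of a vertex of `K` in the glued graph. -/
def inrV (y : K.V) : (H.B ⊕ K.B) × Fin 4 := (Sum.inr y.1, y.2)

/-- The underlying function of the pairing of the graph obtained by gluing `H`
and `K` along the color-0 edges `{p, H.pairing p}` and `{q, K.pairing q}`:
these two edges are cut and the half-edges are reglued as `p — q` and
`H.pairing p — K.pairing q`.  The new pair of edges is a 2-edge-cut of the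
resulting graph when `H` and `K` are connected. -/
def glueFun (p : H.V) (q : K.V) : (H.B ⊕ K.B) × Fin 4 → (H.B ⊕ K.B) × Fin 4 :=
  fun z =>
    match z with
    | (Sum.inl u, k) =>
        if (u, k) = p then inrV H K q
        else if (u, k) = H.pairing p then inrV H K (K.pairing q)
        else inlV H K (H.pairing (u, k))
    | (Sum.inr u, k) =>
        if (u, k) = q then inlV H K p
        else if (u, k) = K.pairing q then inlV H K (H.pairing p)
        else inrV H K (K.pairing (u, k))

theorem glueFun_inlV (p : H.V) (q : K.V) (x : H.V) :
    glueFun H K p q (inlV H K x) =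
      if x = p then inrV H K q
      else if x = H.pairing p then inrV H K (K.pairing q)
      else inlV H K (H.pairing x) := by
  cases x
  rfl

theorem glueFun_inrV (p : H.V) (q : K.V) (y : K.V) :
    glueFun H K p q (inrV H K y) =
      if y = q then inlV H K p
      else if y = K.pairing q then inlV H K (H.pairing p)
      else inrV H K (K.pairing y) := by
  cases y
  rfl

theorem inlV_injective : Function.Injective (inlV H K) := by
  rintro ⟨u, k⟩ ⟨u', k'⟩ h
  have h1 : (Sum.inl u : H.B ⊕ K.B) = Sum.inl u' := congrArg Prod.fst h
  have h2 : k = k' := congrArg Prod.snd h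
  exact Prod.ext (Sum.inl_injective h1) h2

theorem inrV_injective : Function.Injective (inrV H K) := by
  rintro ⟨u, k⟩ ⟨u', k'⟩ h
  have h1 : (Sum.inr u : H.B ⊕ K.B) = Sum.inr u' := congrArg Prod.fst h
  have h2 : k = k' := congrArg Prod.snd h
  exact Prod.ext (Sum.inr_injective h1) h2

theorem inlV_ne_inrV (x : H.V) (y : K.V) : inlV H K x ≠ inrV H K y := by
  intro h
  exact Sum.inl_ne_inr (congrArg Prod.fst h)

theorem glueFun_invol_inl (p : H.V) (q : K.V) (x : H.V) :
    glueFun H K p q (glueFun H K p q (inlV H K x)) = inlV H K x := by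
  rw [glueFun_inlV]
  by_cases h1 : x = p
  · rw [if_pos h1, glueFun_inrV, if_pos rfl, h1]
  · by_cases h2 : x = H.pairing p
    · rw [if_neg h1, if_pos h2, glueFun_inrV,
        if_neg (fun h => K.fixfree q h), if_pos rfl, h2]
    · have hne1 : H.pairing x ≠ p := by
        intro h; apply h2
        have := congrArg H.pairing h
        rw [H.invol] at this; exact this
      have hne2 : H.pairing x ≠ H.pairing p := fun h => h1 (H.pairing.injective h)
      rw [if_neg h1, if_neg h2, glueFun_inlV, if_neg hne1, if_neg hne2, H.invol]

theorem glueFun_invol_inr (p : H.V) (q : K.V) (y : K.V) :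
    glueFun H K p q (glueFun H K p q (inrV H K y)) = inrV H K y := by
  rw [glueFun_inrV]
  by_cases h1 : y = q
  · rw [if_pos h1, glueFun_inlV, if_pos rfl, h1]
  · by_cases h2 : y = K.pairing q
    · rw [if_neg h1, if_pos h2, glueFun_inlV,
        if_neg (fun h => H.fixfree p h), if_pos rfl, h2]
    · have hne1 : K.pairing y ≠ q := by
        intro h; apply h2
        have := congrArg K.pairing h
        rw [K.invol] at this; exact this
      have hne2 : K.pairing y ≠ K.pairing q := fun h => h1 (K.pairing.injective h)
      rw [if_neg h1, if_neg h2, glueFun_inrV, if_neg hne1, if_neg hne2, K.invol]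

theorem glueFun_involutive (p : H.V) (q : K.V) :
    Function.Involutive (glueFun H K p q) := by
  rintro ⟨(u | u), k⟩
  · exact glueFun_invol_inl H K p q (u, k)
  · exact glueFun_invol_inr H K p q (u, k)

theorem glueFun_fixfree (p : H.V) (q : K.V) :
    ∀ z, glueFun H K p q z ≠ z := by
  have hl : ∀ x : H.V, glueFun H K p q (inlV H K x) ≠ inlV H K x := by
    intro x h
    rw [glueFun_inlV] at h
    by_cases h1 : x = p
    · rw [if_pos h1] at h
      exact inlV_ne_inrV H K x q h.symm
    · by_cases h2 : x = H.pairing p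
      · rw [if_neg h1, if_pos h2] at h
        exact inlV_ne_inrV H K x (K.pairing q) h.symm
      · rw [if_neg h1, if_neg h2] at h
        exact H.fixfree x (inlV_injective H K h)
  have hr : ∀ y : K.V, glueFun H K p q (inrV H K y) ≠ inrV H K y := by
    intro y h
    rw [glueFun_inrV] at h
    by_cases h1 : y = q
    · rw [if_pos h1] at h
      exact inlV_ne_inrV H K p y h
    · by_cases h2 : y = K.pairing q
      · rw [if_neg h1, if_pos h2] at h
        exact inlV_ne_inrV H K (H.pairing p) y h
      · rw [if_neg h1, if_neg h2] at h
        exact K.fixfree y (inrV_injective H K h)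
  rintro ⟨(u | u), k⟩
  · exact hl (u, k)
  · exact hr (u, k)

/-- Gluing two graphs along a pair of color-0 edges.  When `H` and `K` are
connected, the two new color-0 edges form a 2-edge-cut of the glued graph, and
conversely every connected graph with a color-0 2-edge-cut arises this way
from the two closed graphs obtained by cutting the two edges and closing each
side. -/
def glue (p : H.V) (q : K.V) : TGraph where
  B := H.B ⊕ K.B
  pairing := (glueFun_involutive H K p q).toPerm
  invol := fun v => glueFun_involutive H K p q v
  fixfree := fun v => glueFun_fixfree H K p q v

/-- Insertion of a melonic dipole (the 2-point graph obtained by cutting one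
color-0 edge of `G_2`) on the color-0 edge `{v, G.pairing v}` of `G`. -/
def insertDipole (G : TGraph) (v : G.V) : TGraph :=
  glue G G2 v ((0 : Fin 2), (0 : Fin 4))

end TGraph

open TGraph

/-- Melonic graphs (up to isomorphism): `G_2` is melonic, and inserting a
melonic dipole on any color-0 edge of a melonic graph yields a melonic
graph. -/
inductive IsMelonic : TGraph → Prop
  | base {G : TGraph} (h : IsIso G G2) : IsMelonic G
  | insert {G : TGraph} (hG : IsMelonic G) (v : G.V) {H : TGraph}
      (h : IsIso H (G.insertDipole v)) : IsMelonic H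

/-- Double tadpoles decorated with melonic 2-point functions (up to
isomorphism): these are exactly the graphs obtained from one of the double
tadpoles `G_1^{(c)}` by repeatedly inserting melonic dipoles on color-0 edges,
i.e. double tadpoles whose two color-0 edges are replaced by melonic 2-point
functions. -/
inductive IsDecoratedTadpole : TGraph → Prop
  | base {G : TGraph} (c : Fin 3) (h : IsIso G (G1 c)) : IsDecoratedTadpole G
  | insert {G : TGraph} (hG : IsDecoratedTadpole G) (v : G.V) {H : TGraph}
      (h : IsIso H (G.insertDipole v)) : IsDecoratedTadpole H


/-! Inserting the dipole cuts the edge `{v, pairing v}` of `G` and the edge `{(0, 0), (1, 0)}`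
of `G_2` and reglues them crosswise.  For each color `c` this merges the face of `G` through `v`
with the face of `G_2` through `(0, 0)`, which consists of the dipole vertices `(i, k)` with
`k ∈ {0, σ_c 0}` (`σ_c = bubblePerm c`); the other four dipole vertices still form a face of
length 2, and every other face of `G` is unchanged.  So the faces of color `c` of the new graph
are in bijection with `Option` of those of `G`, `none` being the new face. -/

namespace MulAction

theorem card_orbitRel_quotient_eq_of_rightInverse {M α β : Type*} [Group M] [MulAction M α]
    (f : α → β) (s : β → α) (hf : ∀ (g : M) (x : α), f (g • x) = f x)
    (hfs : Function.RightInverse s f) (hsf : ∀ x, x ∈ orbit M (s (f x))) :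
    Nat.card (orbitRel.Quotient M α) = Nat.card β :=
  Nat.card_congr
    { toFun := Quotient.lift f fun _ y ⟨g, hg⟩ => hg ▸ hf g y
      invFun := fun b => ⟦s b⟧
      left_inv := Quotient.ind fun x => Quotient.sound (mem_orbit_symm.mp (hsf x))
      right_inv := hfs }

end MulAction

theorem bubblePerm_bubblePerm :
    ∀ (c : Fin 3) (k : Fin 4), bubblePerm c (bubblePerm c k) = k := by
  decide

theorem bubblePerm_zero_ne_zero : ∀ c : Fin 3, bubblePerm c 0 ≠ 0 := by
  decide

abbrev OnCutFace (c : Fin 3) (k : Fin 4) : Prop := k = 0 ∨ bubblePerm c k = 0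

theorem onCutFace_bubblePerm_iff (c : Fin 3) (k : Fin 4) :
    OnCutFace c (bubblePerm c k) ↔ OnCutFace c k := by
  rw [OnCutFace, OnCutFace, bubblePerm_bubblePerm, or_comm]

theorem eq_or_bubblePerm_eq_of_not_onCutFace : ∀ (c : Fin 3) (k : Fin 4), ¬OnCutFace c k →
    k = bubblePerm (c + 1) 0 ∨ bubblePerm c k = bubblePerm (c + 1) 0 := by
  decide

theorem not_onCutFace_bubblePerm_succ_zero :
    ∀ c : Fin 3, ¬OnCutFace c (bubblePerm (c + 1) 0) := by
  decide

namespace TGraph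

abbrev Faces (G : TGraph) (c : Fin 3) : Type := MulAction.orbitRel.Quotient (G.faceGroup c) G.V

section Faces

variable (G : TGraph) (c : Fin 3)

theorem sameFace_equivalence : Equivalence (G.sameFace c) := (MulAction.orbitRel _ _).iseqv

instance : Trans (G.sameFace c) (G.sameFace c) (G.sameFace c) :=
  ⟨(G.sameFace_equivalence c).trans⟩

theorem sameFace_pairing (x : G.V) : G.sameFace c (G.pairing x) x :=
  ⟨⟨G.pairing, Subgroup.subset_closure (Set.mem_insert _ _)⟩, rfl⟩

theorem sameFace_of_pairing_eq {x y : G.V} (h : G.pairing x = y) : G.sameFace c y x :=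
  h ▸ G.sameFace_pairing c x

theorem sameFace_colPerm (x : G.V) : G.sameFace c (G.colPerm c x) x :=
  ⟨⟨G.colPerm c, Subgroup.subset_closure (Set.mem_insert_of_mem _ rfl)⟩, rfl⟩

theorem mk_pairing (x : G.V) : (⟦G.pairing x⟧ : G.Faces c) = ⟦x⟧ :=
  Quotient.sound (G.sameFace_pairing c x)

theorem mk_colPerm (x : G.V) : (⟦G.colPerm c x⟧ : G.Faces c) = ⟦x⟧ :=
  Quotient.sound (G.sameFace_colPerm c x)

variable {G c}

theorem faceGroup_induction {β : Type*} {r : β → β → Prop} (hr : Equivalence r)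
    {φ : G.V → β}
    (hpairing : ∀ x, r (φ (G.pairing x)) (φ x)) (hcol : ∀ x, r (φ (G.colPerm c x)) (φ x))
    {g : Equiv.Perm G.V} (hg : g ∈ G.faceGroup c) (x : G.V) : r (φ (g x)) (φ x) := by
  induction hg using Subgroup.closure_induction generalizing x with
  | mem g hg =>
    rcases hg with rfl | rfl
    exacts [hpairing x, hcol x]
  | one => exact hr.refl _
  | mul g h _ _ ihg ihh => exact hr.trans (ihg (h x)) (ihh x)
  | inv g _ ih => simpa using hr.symm (ih (g⁻¹ x))

end Faces

section Glue

variable {H K : TGraph} {p : H.V} {q : K.V}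

theorem b_glue : (glue H K p q).b = H.b + K.b :=
  Fintype.card_sum

theorem glue_pairing_inlV_self : (glue H K p q).pairing (inlV H K p) = inrV H K q :=
  (glueFun_inlV H K p q p).trans (if_pos rfl)

theorem glue_pairing_inlV_pairing :
    (glue H K p q).pairing (inlV H K (H.pairing p)) = inrV H K (K.pairing q) :=
  (glueFun_inlV H K p q _).trans ((if_neg (H.fixfree p)).trans (if_pos rfl))

theorem glue_pairing_inrV_self : (glue H K p q).pairing (inrV H K q) = inlV H K p := by
  rw [← glue_pairing_inlV_self]
  exact (glue H K p q).invol _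

theorem glue_pairing_inrV_pairing :
    (glue H K p q).pairing (inrV H K (K.pairing q)) = inlV H K (H.pairing p) := by
  rw [← glue_pairing_inlV_pairing]
  exact (glue H K p q).invol _

theorem glue_pairing_inlV_of_ne {x : H.V} (h₁ : x ≠ p) (h₂ : x ≠ H.pairing p) :
    (glue H K p q).pairing (inlV H K x) = inlV H K (H.pairing x) :=
  (glueFun_inlV H K p q x).trans ((if_neg h₁).trans (if_neg h₂))

theorem glue_pairing_inrV_of_ne {y : K.V} (h₁ : y ≠ q) (h₂ : y ≠ K.pairing q) :
    (glue H K p q).pairing (inrV H K y) = inrV H K (K.pairing y) :=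
  (glueFun_inrV H K p q y).trans ((if_neg h₁).trans (if_neg h₂))

-- The only `H`-edge missing from the glued graph is `{p, pairing p}`; `hp` replaces it.
theorem glue_sameFace_inlV {c : Fin 3}
    (hp : (glue H K p q).sameFace c (inlV H K (H.pairing p)) (inlV H K p))
    {x y : H.V} (h : H.sameFace c x y) :
    (glue H K p q).sameFace c (inlV H K x) (inlV H K y) := by
  obtain ⟨⟨g, hg⟩, rfl⟩ := h
  refine faceGroup_induction (sameFace_equivalence (glue H K p q) c)
    (φ := fun x : H.V => (inlV H K x : (glue H K p q).V)) ?_ ?_ hg y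
  · intro x
    by_cases h₁ : x = p
    · exact h₁ ▸ hp
    by_cases h₂ : x = H.pairing p
    · subst h₂
      rw [H.invol]
      exact (sameFace_equivalence _ c).symm hp
    rw [← glue_pairing_inlV_of_ne h₁ h₂]
    exact sameFace_pairing _ c _
  · intro x
    exact sameFace_colPerm _ c _

end Glue

section Dipole

variable {G : TGraph} {v : G.V}

def baseVertex (x : G.V) : (G.insertDipole v).V := inlV G G2 x

def dipoleVertex (i : Fin 2) (k : Fin 4) : (G.insertDipole v).V := inrV G G2 (i, k)

theorem insertDipole_vertex_induction {P : (G.insertDipole v).V → Prop}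
    (hl : ∀ x, P (baseVertex x)) (hr : ∀ i k, P (dipoleVertex i k)) (z : (G.insertDipole v).V) :
    P z := by
  obtain ⟨u | i, k⟩ := z
  exacts [hl (u, k), hr i k]

theorem b_insertDipole : (G.insertDipole v).b = G.b + 2 :=
  b_glue

theorem insertDipole_pairing_baseVertex_self :
    (G.insertDipole v).pairing (baseVertex v) = dipoleVertex 0 0 :=
  glue_pairing_inlV_self

theorem insertDipole_pairing_baseVertex_pairing :
    (G.insertDipole v).pairing (baseVertex (G.pairing v)) = dipoleVertex 1 0 :=
  glue_pairing_inlV_pairing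

theorem insertDipole_pairing_dipoleVertex_zero_zero :
    (G.insertDipole v).pairing (dipoleVertex 0 0) = baseVertex v :=
  glue_pairing_inrV_self

theorem insertDipole_pairing_dipoleVertex_one_zero :
    (G.insertDipole v).pairing (dipoleVertex 1 0) = baseVertex (G.pairing v) :=
  glue_pairing_inrV_pairing

theorem insertDipole_pairing_baseVertex_of_ne {x : G.V} (h₁ : x ≠ v)
    (h₂ : x ≠ G.pairing v) :
    (G.insertDipole v).pairing (baseVertex x) = baseVertex (G.pairing x) :=
  glue_pairing_inlV_of_ne h₁ h₂

theorem insertDipole_pairing_dipoleVertex {k : Fin 4} (hk : k ≠ 0) (i : Fin 2) :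
    (G.insertDipole v).pairing (dipoleVertex i k) = dipoleVertex (Equiv.swap 0 1 i) k :=
  glue_pairing_inrV_of_ne (fun h => hk (congrArg Prod.snd h))
    (fun h => hk (congrArg Prod.snd h))

variable (c : Fin 3)

theorem insertDipole_sameFace_dipoleVertex_colPerm (i : Fin 2) (k : Fin 4) :
    (G.insertDipole v).sameFace c (dipoleVertex i (bubblePerm c k)) (dipoleVertex i k) :=
  sameFace_colPerm _ c _

theorem insertDipole_sameFace_dipoleVertex_swap (i : Fin 2) (k : Fin 4) :
    (G.insertDipole v).sameFace c (dipoleVertex i k) (dipoleVertex 0 k) := by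
  have hne {k : Fin 4} (hk : k ≠ 0) :
      (G.insertDipole v).sameFace c (dipoleVertex 1 k) (dipoleVertex 0 k) :=
    sameFace_of_pairing_eq _ c (insertDipole_pairing_dipoleVertex hk 0)
  match i with
  | 0 => exact (sameFace_equivalence _ c).refl _
  | 1 =>
    by_cases hk : k = 0
    · -- the color-0 edge between `(1, 0)` and `(0, 0)` is the one that was cut
      subst hk
      calc dipoleVertex 1 0 = dipoleVertex 1 (bubblePerm c (bubblePerm c 0)) := by
            rw [bubblePerm_bubblePerm]
        (G.insertDipole v).sameFace c _ (dipoleVertex 1 (bubblePerm c 0)) :=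
            insertDipole_sameFace_dipoleVertex_colPerm c 1 _
        (G.insertDipole v).sameFace c _ (dipoleVertex 0 (bubblePerm c 0)) :=
            hne (bubblePerm_zero_ne_zero c)
        (G.insertDipole v).sameFace c _ (dipoleVertex 0 0) :=
            insertDipole_sameFace_dipoleVertex_colPerm c 0 0
    · exact hne hk

theorem insertDipole_sameFace_baseVertex_pairing :
    (G.insertDipole v).sameFace c (baseVertex (G.pairing v)) (baseVertex v) :=
  calc (G.insertDipole v).sameFace c _ (dipoleVertex 1 0) :=
        (sameFace_equivalence _ c).symm
          (sameFace_of_pairing_eq _ c insertDipole_pairing_baseVertex_pairing)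
    (G.insertDipole v).sameFace c _ (dipoleVertex 0 0) :=
        insertDipole_sameFace_dipoleVertex_swap c 1 0
    (G.insertDipole v).sameFace c _ (baseVertex v) :=
        sameFace_of_pairing_eq _ c insertDipole_pairing_baseVertex_self

theorem insertDipole_sameFace_baseVertex {x y : G.V} (h : G.sameFace c x y) :
    (G.insertDipole v).sameFace c (baseVertex x) (baseVertex y) :=
  glue_sameFace_inlV (insertDipole_sameFace_baseVertex_pairing c) h

theorem insertDipole_sameFace_dipoleVertex_of_onCutFace {k : Fin 4}
    (hk : OnCutFace c k) (i : Fin 2) :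
    (G.insertDipole v).sameFace c (dipoleVertex i k) (baseVertex v) := by
  have hzero : (G.insertDipole v).sameFace c (dipoleVertex i k) (dipoleVertex i 0) := by
    rcases hk with rfl | hk
    · exact (sameFace_equivalence _ c).refl _
    · calc dipoleVertex i k = dipoleVertex i (bubblePerm c 0) := by
            rw [← hk, bubblePerm_bubblePerm]
        (G.insertDipole v).sameFace c _ (dipoleVertex i 0) :=
            insertDipole_sameFace_dipoleVertex_colPerm c i 0
  calc (G.insertDipole v).sameFace c _ (dipoleVertex i 0) := hzero
    (G.insertDipole v).sameFace c _ (dipoleVertex 0 0) :=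
        insertDipole_sameFace_dipoleVertex_swap c i 0
    (G.insertDipole v).sameFace c _ (baseVertex v) :=
        sameFace_of_pairing_eq _ c insertDipole_pairing_baseVertex_self

theorem insertDipole_sameFace_dipoleVertex_of_not_onCutFace {k : Fin 4}
    (hk : ¬OnCutFace c k) (i : Fin 2) :
    (G.insertDipole v).sameFace c (dipoleVertex i k)
      (dipoleVertex 0 (bubblePerm (c + 1) 0)) := by
  have hswap := insertDipole_sameFace_dipoleVertex_swap (v := v) c i k
  rcases eq_or_bubblePerm_eq_of_not_onCutFace c k hk with rfl | hσ
  · exact hswap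
  · rw [← hσ]
    exact (sameFace_equivalence _ c).trans hswap
      ((sameFace_equivalence _ c).symm (insertDipole_sameFace_dipoleVertex_colPerm c 0 k))

variable {c}

noncomputable def insertDipoleFace (c : Fin 3) : (G.insertDipole v).V → Option (G.Faces c)
  | (Sum.inl u, k) => some ⟦(u, k)⟧
  | (Sum.inr _, k) => if OnCutFace c k then some ⟦v⟧ else none

theorem insertDipoleFace_baseVertex (x : G.V) :
    insertDipoleFace c (baseVertex x : (G.insertDipole v).V) = some ⟦x⟧ := rfl

theorem insertDipoleFace_dipoleVertex (i : Fin 2) (k : Fin 4) :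
    insertDipoleFace c (dipoleVertex i k : (G.insertDipole v).V) =
      if OnCutFace c k then some ⟦v⟧ else none := rfl

-- A neighbour of the vertex `0` by a color other than `c` lies on the new face.
noncomputable def insertDipoleFaceRep (c : Fin 3) : Option (G.Faces c) → (G.insertDipole v).V
  | some f => baseVertex f.out
  | none => dipoleVertex 0 (bubblePerm (c + 1) 0)

theorem insertDipoleFace_pairing (z : (G.insertDipole v).V) :
    insertDipoleFace c ((G.insertDipole v).pairing z) = insertDipoleFace c z := by
  induction z using insertDipole_vertex_induction with
  | hl x =>
    by_cases h₁ : x = v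
    · rw [h₁, insertDipole_pairing_baseVertex_self, insertDipoleFace_dipoleVertex,
        if_pos (Or.inl rfl), insertDipoleFace_baseVertex]
    by_cases h₂ : x = G.pairing v
    · rw [h₂, insertDipole_pairing_baseVertex_pairing, insertDipoleFace_dipoleVertex,
        if_pos (Or.inl rfl), insertDipoleFace_baseVertex, mk_pairing]
    rw [insertDipole_pairing_baseVertex_of_ne h₁ h₂, insertDipoleFace_baseVertex,
      insertDipoleFace_baseVertex, mk_pairing]
  | hr i k =>
    by_cases hk : k = 0
    · subst hk
      match i with
      | 0 =>
        rw [insertDipole_pairing_dipoleVertex_zero_zero, insertDipoleFace_dipoleVertex,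
          if_pos (Or.inl rfl), insertDipoleFace_baseVertex]
      | 1 =>
        rw [insertDipole_pairing_dipoleVertex_one_zero, insertDipoleFace_dipoleVertex,
          if_pos (Or.inl rfl), insertDipoleFace_baseVertex, mk_pairing]
    rw [insertDipole_pairing_dipoleVertex hk, insertDipoleFace_dipoleVertex,
      insertDipoleFace_dipoleVertex]

theorem insertDipoleFace_colPerm (z : (G.insertDipole v).V) :
    insertDipoleFace c ((G.insertDipole v).colPerm c z) = insertDipoleFace c z := by
  induction z using insertDipole_vertex_induction with
  | hl x => exact congrArg some (mk_colPerm G c x)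
  | hr i k =>
    change insertDipoleFace c (dipoleVertex i (bubblePerm c k)) = _
    rw [insertDipoleFace_dipoleVertex, insertDipoleFace_dipoleVertex]
    exact if_congr (onCutFace_bubblePerm_iff c k) rfl rfl

theorem insertDipoleFace_smul (g : (G.insertDipole v).faceGroup c) (z : (G.insertDipole v).V) :
    insertDipoleFace c (g • z) = insertDipoleFace c z :=
  faceGroup_induction eq_equivalence insertDipoleFace_pairing insertDipoleFace_colPerm g.2 z

variable (c)

theorem sameFace_insertDipoleFaceRep (z : (G.insertDipole v).V) :
    (G.insertDipole v).sameFace c z (insertDipoleFaceRep c (insertDipoleFace c z)) := by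
  have hout (x : G.V) : G.sameFace c x (⟦x⟧ : G.Faces c).out :=
    (sameFace_equivalence G c).symm (Quotient.mk_out (s := MulAction.orbitRel _ _) x)
  induction z using insertDipole_vertex_induction with
  | hl x => exact insertDipole_sameFace_baseVertex c (hout x)
  | hr i k =>
    rw [insertDipoleFace_dipoleVertex]
    split_ifs with hk
    · calc (G.insertDipole v).sameFace c _ (baseVertex v) :=
            insertDipole_sameFace_dipoleVertex_of_onCutFace c hk i
        (G.insertDipole v).sameFace c _ (baseVertex (⟦v⟧ : G.Faces c).out) :=
            insertDipole_sameFace_baseVertex c (hout v)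
    · exact insertDipole_sameFace_dipoleVertex_of_not_onCutFace c hk i

theorem numFaces_insertDipole : (G.insertDipole v).numFaces c = G.numFaces c + 1 := by
  rw [numFaces, numFaces, ← Finite.card_option]
  refine MulAction.card_orbitRel_quotient_eq_of_rightInverse (insertDipoleFace c)
    (insertDipoleFaceRep c) insertDipoleFace_smul ?_ (sameFace_insertDipoleFaceRep c)
  rintro (_ | f)
  · exact if_neg (not_onCutFace_bubblePerm_succ_zero c)
  · exact congrArg some f.out_eq

end Dipole

end TGraph

/-- Insertion of a melonic dipole on a color-0 edge of a graph
`G` of the tetrahedral model increases the number of bubbles by 2 and the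
total number of faces by exactly 3. -/
theorem insertDipole_bubbles_faces (G : TGraph) (v : G.V) :
    (G.insertDipole v).b = G.b + 2 ∧ (G.insertDipole v).F = G.F + 3 := by
  refine ⟨b_insertDipole, ?_⟩
  simp only [F, numFaces_insertDipole, Finset.sum_add_distrib]
  simp
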